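/- arXiv:1009.5490 — 2 statements merged into one kernel-verified Lean document; each statement's English description precedes it below -/
import Mathlib

section
/- Let f, g : ℝ × ℝ → ℝ be C² functions, let ε ∈ ℝ, and suppose f is a solution of the Born-Infeld equation on ℝ². Assume that (i) for all (x,t), g(x, t·cosh ε + f(x,t)·sinh ε) = t·sinh ε + f(x,t)·cosh ε, (ii) for all (x,t), cosh ε + (∂f/∂t)(x,t)·sinh ε ≠ 0, and (iii) for every (x,s) ∈ ℝ² there exists t with s = t·cosh ε + f(x,t)·sinh ε. Then g is a solution of the Born-Infeld equation on ℝ². (This expresses the hyperbolic rotation symmetry in the (t,u)-plane generated by v₆ = u∂_t + t∂_u.) -/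
/-- Partial derivative with respect to the first variable `x`. -/
noncomputable def px (u : ℝ × ℝ → ℝ) (p : ℝ × ℝ) : ℝ := fderiv ℝ u p (1, 0)

/-- Partial derivative with respect to the second variable `t`. -/
noncomputable def pt (u : ℝ × ℝ → ℝ) (p : ℝ × ℝ) : ℝ := fderiv ℝ u p (0, 1)

/-- `u` is a (C²) solution of the Born-Infeld equation
`(1 - u_t²)·u_xx + 2·u_x·u_t·u_xt - (1 + u_x²)·u_tt = 0` on the set `Ω`:
`u` is C² on a neighborhood of `Ω` and the equation holds at every point of `Ω`. -/
def IsBISolution (u : ℝ × ℝ → ℝ) (Ω : Set (ℝ × ℝ)) : Prop :=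
  (∃ V : Set (ℝ × ℝ), IsOpen V ∧ Ω ⊆ V ∧ ContDiffOn ℝ 2 u V) ∧
  ∀ p ∈ Ω,
    (1 - pt u p ^ 2) * px (px u) p + 2 * px u p * pt u p * px (pt u) p
      - (1 + px u p ^ 2) * pt (pt u) p = 0

/-!
The map `(x, t, u) ↦ (x, t cosh ε + u sinh ε, t sinh ε + u cosh ε)` is a Lorentz boost
carrying the graph of `f` onto the graph of `g`. Differentiating the relation `g (x, T) = U`
once and twice expresses the 2-jet of `g` at `(x, T)` through that of `f` at `(x, t)`;
substituting, and using `cosh² ε - sinh² ε = 1`, the Born-Infeld expressions are related by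
`BI[g] (x, T) · (cosh ε + f_t sinh ε)³ = BI[f] (x, t)`, where `cosh ε + f_t sinh ε = ∂T/∂t`.
-/

section PartialDerivatives

variable {u v φ : ℝ × ℝ → ℝ} {p : ℝ × ℝ}

theorem fderiv_apply_eq_px_pt (u : ℝ × ℝ → ℝ) (p w : ℝ × ℝ) :
    fderiv ℝ u p w = w.1 * px u p + w.2 * pt u p := by
  have hw : w = w.1 • ((1 : ℝ), (0 : ℝ)) + w.2 • ((0 : ℝ), (1 : ℝ)) := by simp
  rw [hw, map_add, map_smul, map_smul]
  simp [px, pt]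

theorem ContDiff.px {n : WithTop ℕ∞} (hu : ContDiff ℝ (n + 1) u) : ContDiff ℝ n (px u) :=
  (hu.fderiv_right le_rfl).clm_apply contDiff_const

theorem ContDiff.pt {n : WithTop ℕ∞} (hu : ContDiff ℝ (n + 1) u) : ContDiff ℝ n (pt u) :=
  (hu.fderiv_right le_rfl).clm_apply contDiff_const

theorem px_pt_comm (hu : ContDiff ℝ 2 u) (p : ℝ × ℝ) : px (pt u) p = pt (px u) p := by
  have hd : DifferentiableAt ℝ (fderiv ℝ u) p :=
    (hu.fderiv_right le_rfl).differentiable one_ne_zero p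
  have hsnd (v w : ℝ × ℝ) :
      fderiv ℝ (fun q => fderiv ℝ u q w) p v = fderiv ℝ (fderiv ℝ u) p v w := by
    simp [fderiv_clm_apply hd (differentiableAt_const w)]
  have hsymm := hu.contDiffAt.isSymmSndFDerivAt (x := p)
    (by simp [minSmoothness_of_isRCLikeNormedField])
  exact (hsnd _ _).trans ((hsymm.eq _ _).trans (hsnd _ _).symm)

theorem px_add (hu : DifferentiableAt ℝ u p) (hv : DifferentiableAt ℝ v p) :
    px (fun q => u q + v q) p = px u p + px v p := by
  simp [px, fderiv_fun_add hu hv]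

theorem px_mul (hu : DifferentiableAt ℝ u p) (hv : DifferentiableAt ℝ v p) :
    px (fun q => u q * v q) p = px u p * v p + u p * px v p := by
  simp only [px, fderiv_fun_mul hu hv, add_apply, smul_apply, smul_eq_mul]
  ring

theorem pt_mul (hu : DifferentiableAt ℝ u p) (hv : DifferentiableAt ℝ v p) :
    pt (fun q => u q * v q) p = pt u p * v p + u p * pt v p := by
  simp only [pt, fderiv_fun_mul hu hv, add_apply, smul_apply, smul_eq_mul]
  ring

theorem px_mul_const (hu : DifferentiableAt ℝ u p) (c : ℝ) :
    px (fun q => u q * c) p = px u p * c := by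
  rw [px, px, fderiv_mul_const hu, smul_apply, smul_eq_mul, mul_comm]

theorem pt_mul_const (hu : DifferentiableAt ℝ u p) (c : ℝ) :
    pt (fun q => u q * c) p = pt u p * c := by
  rw [pt, pt, fderiv_mul_const hu, smul_apply, smul_eq_mul, mul_comm]

theorem px_const_add (c : ℝ) : px (fun q => c + u q) p = px u p := by
  simp [px, fderiv_const_add]

theorem pt_const_add (c : ℝ) : pt (fun q => c + u q) p = pt u p := by
  simp [pt, fderiv_const_add]

theorem fderiv_comp_fst_prodMk (hφ : DifferentiableAt ℝ φ p)
    (hu : DifferentiableAt ℝ u (p.1, φ p)) (w : ℝ × ℝ) :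
    fderiv ℝ (fun q => u (q.1, φ q)) p w
      = w.1 * px u (p.1, φ p) + fderiv ℝ φ p w * pt u (p.1, φ p) := by
  have hΦ : HasFDerivAt (fun q : ℝ × ℝ => (q.1, φ q))
      ((ContinuousLinearMap.fst ℝ ℝ ℝ).prod (fderiv ℝ φ p)) p :=
    hasFDerivAt_fst.prodMk hφ.hasFDerivAt
  change fderiv ℝ (u ∘ fun q => (q.1, φ q)) p w = _
  rw [(hu.hasFDerivAt.comp p hΦ).fderiv]
  simp [fderiv_apply_eq_px_pt u _ (w.1, _)]

theorem px_comp_fst_prodMk (hφ : DifferentiableAt ℝ φ p)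
    (hu : DifferentiableAt ℝ u (p.1, φ p)) :
    px (fun q => u (q.1, φ q)) p = px u (p.1, φ p) + px φ p * pt u (p.1, φ p) := by
  simpa [px] using fderiv_comp_fst_prodMk hφ hu (1, 0)

theorem pt_comp_fst_prodMk (hφ : DifferentiableAt ℝ φ p)
    (hu : DifferentiableAt ℝ u (p.1, φ p)) :
    pt (fun q => u (q.1, φ q)) p = pt φ p * pt u (p.1, φ p) := by
  simpa [pt] using fderiv_comp_fst_prodMk hφ hu (0, 1)

end PartialDerivatives

theorem bornInfeld_jet_boost {a b fx ft fxx fxt ftt gx gt gxx gxt gtt : ℝ}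
    (hab : a ^ 2 - b ^ 2 = 1) (hA : a + ft * b ≠ 0)
    (h1 : (a + ft * b) * gt = b + ft * a)
    (h2 : gx + fx * b * gt = fx * a)
    (h3 : ftt * b * gt + (a + ft * b) * ((a + ft * b) * gtt) = ftt * a)
    (h4 : fxt * b * gt + (a + ft * b) * (gxt + fx * b * gtt) = fxt * a)
    (h5 : gxx + fx * b * gxt + (fxx * b * gt + fx * b * (gxt + fx * b * gtt)) = fxx * a) :
    ((1 - gt ^ 2) * gxx + 2 * gx * gt * gxt - (1 + gx ^ 2) * gtt) * (a + ft * b) ^ 3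
      = (1 - ft ^ 2) * fxx + 2 * fx * ft * fxt - (1 + fx ^ 2) * ftt := by
  have hgx : gx * (a + ft * b) = fx := by
    linear_combination (a + ft * b) * h2 - fx * b * h1 + fx * hab
  have hgtt : gtt * (a + ft * b) ^ 3 = ftt := by
    linear_combination (a + ft * b) * h3 - ftt * b * h1 + ftt * hab
  have hgxt : gxt * (a + ft * b) ^ 3 = fxt * (a + ft * b) - fx * b * ftt := by
    linear_combination (a + ft * b) ^ 2 * h4 - fx * b * hgtt - fxt * b * (a + ft * b) * h1
      + fxt * (a + ft * b) * hab
  have hgxx : gxx * (a + ft * b) ^ 3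
      = fxx * (a + ft * b) ^ 2 - 2 * fx * b * fxt * (a + ft * b) + fx ^ 2 * b ^ 2 * ftt := by
    linear_combination (a + ft * b) ^ 3 * h5 - 2 * fx * b * hgxt - fx ^ 2 * b ^ 2 * hgtt
      - fxx * b * (a + ft * b) ^ 2 * h1 + fxx * (a + ft * b) ^ 2 * hab
  have hgt : (1 - gt ^ 2) * (a + ft * b) ^ 2 = 1 - ft ^ 2 := by
    linear_combination (1 - ft ^ 2) * hab - ((a + ft * b) * gt + b + ft * a) * h1
  refine mul_right_cancel₀ (pow_ne_zero 2 hA) ?_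
  calc ((1 - gt ^ 2) * gxx + 2 * gx * gt * gxt - (1 + gx ^ 2) * gtt) * (a + ft * b) ^ 3
          * (a + ft * b) ^ 2
      = (1 - gt ^ 2) * (a + ft * b) ^ 2 * (gxx * (a + ft * b) ^ 3)
          + 2 * (gx * (a + ft * b)) * ((a + ft * b) * gt) * (gxt * (a + ft * b) ^ 3)
          - ((a + ft * b) ^ 2 + (gx * (a + ft * b)) ^ 2) * (gtt * (a + ft * b) ^ 3) := by ring
    _ = (1 - ft ^ 2)
            * (fxx * (a + ft * b) ^ 2 - 2 * fx * b * fxt * (a + ft * b) + fx ^ 2 * b ^ 2 * ftt)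
          + 2 * fx * (b + ft * a) * (fxt * (a + ft * b) - fx * b * ftt)
          - ((a + ft * b) ^ 2 + fx ^ 2) * ftt := by rw [hgt, hgxx, hgx, h1, hgxt, hgtt]
    _ = ((1 - ft ^ 2) * fxx + 2 * fx * ft * fxt - (1 + fx ^ 2) * ftt) * (a + ft * b) ^ 2 := by
      linear_combination fx ^ 2 * ftt * hab

noncomputable def bornInfeldOp (u : ℝ × ℝ → ℝ) (p : ℝ × ℝ) : ℝ :=
  (1 - pt u p ^ 2) * px (px u) p + 2 * px u p * pt u p * px (pt u) p
    - (1 + px u p ^ 2) * pt (pt u) p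

/-- `a t + b u` along the graph `u = f (x, t)`: with `(a, b) = (cosh ε, sinh ε)` and
`(sinh ε, cosh ε)` these are the boosted `t` and `u`. -/
def boostCoord (f : ℝ × ℝ → ℝ) (a b : ℝ) (q : ℝ × ℝ) : ℝ := q.2 * a + f q * b

section Boost

variable {f g : ℝ × ℝ → ℝ} {a b : ℝ} {p : ℝ × ℝ}

@[fun_prop]
theorem Differentiable.boostCoord (hf : Differentiable ℝ f) (a b : ℝ) :
    Differentiable ℝ (boostCoord f a b) := by
  unfold _root_.boostCoord; fun_prop

theorem fderiv_boostCoord_apply (hf : DifferentiableAt ℝ f p) (a b : ℝ) (w : ℝ × ℝ) :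
    fderiv ℝ (boostCoord f a b) p w = w.2 * a + fderiv ℝ f p w * b := by
  have h : HasFDerivAt (boostCoord f a b)
      (a • ContinuousLinearMap.snd ℝ ℝ ℝ + b • fderiv ℝ f p) p :=
    (hasFDerivAt_snd.mul_const a).add (hf.hasFDerivAt.mul_const b)
  simp [h.fderiv, mul_comm]

theorem px_boostCoord (hf : DifferentiableAt ℝ f p) (a b : ℝ) :
    px (boostCoord f a b) p = px f p * b := by
  simpa [px] using fderiv_boostCoord_apply hf a b (1, 0)

theorem pt_boostCoord (hf : DifferentiableAt ℝ f p) (a b : ℝ) :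
    pt (boostCoord f a b) p = a + pt f p * b := by
  simpa [pt] using fderiv_boostCoord_apply hf a b (0, 1)

theorem pt_boost_relation (hf : Differentiable ℝ f) (hg : Differentiable ℝ g)
    (hrel : ∀ q, g (q.1, boostCoord f a b q) = boostCoord f b a q) (p : ℝ × ℝ) :
    (a + pt f p * b) * pt g (p.1, boostCoord f a b p) = b + pt f p * a := by
  have h := pt_comp_fst_prodMk (u := g) ((hf.boostCoord a b) p) (hg _)
  rwa [funext hrel, pt_boostCoord (hf p), pt_boostCoord (hf p), eq_comm] at h

theorem px_boost_relation (hf : Differentiable ℝ f) (hg : Differentiable ℝ g)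
    (hrel : ∀ q, g (q.1, boostCoord f a b q) = boostCoord f b a q) (p : ℝ × ℝ) :
    px g (p.1, boostCoord f a b p) + px f p * b * pt g (p.1, boostCoord f a b p)
      = px f p * a := by
  have h := px_comp_fst_prodMk (u := g) ((hf.boostCoord a b) p) (hg _)
  rwa [funext hrel, px_boostCoord (hf p), px_boostCoord (hf p), eq_comm] at h

theorem pt_pt_boost_relation (hf : ContDiff ℝ 2 f) (hg : ContDiff ℝ 2 g)
    (hrel : ∀ q, g (q.1, boostCoord f a b q) = boostCoord f b a q) (p : ℝ × ℝ) :
    pt (pt f) p * b * pt g (p.1, boostCoord f a b p)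
        + (a + pt f p * b) * ((a + pt f p * b) * pt (pt g) (p.1, boostCoord f a b p))
      = pt (pt f) p * a := by
  have hf1 : Differentiable ℝ f := hf.differentiable two_ne_zero
  have hft : Differentiable ℝ (pt f) := hf.pt.differentiable one_ne_zero
  have hgt : Differentiable ℝ (pt g) := hg.pt.differentiable one_ne_zero
  have h := congrArg (pt · p)
    (funext (pt_boost_relation hf1 (hg.differentiable two_ne_zero) hrel))
  rw [pt_mul (by fun_prop) (by fun_prop), pt_const_add, pt_mul_const (hft p),
    pt_comp_fst_prodMk ((hf1.boostCoord a b) p) (hgt _), pt_boostCoord (hf1 p),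
    pt_const_add, pt_mul_const (hft p)] at h
  exact h

theorem px_pt_boost_relation (hf : ContDiff ℝ 2 f) (hg : ContDiff ℝ 2 g)
    (hrel : ∀ q, g (q.1, boostCoord f a b q) = boostCoord f b a q) (p : ℝ × ℝ) :
    px (pt f) p * b * pt g (p.1, boostCoord f a b p)
        + (a + pt f p * b) * (px (pt g) (p.1, boostCoord f a b p)
          + px f p * b * pt (pt g) (p.1, boostCoord f a b p))
      = px (pt f) p * a := by
  have hf1 : Differentiable ℝ f := hf.differentiable two_ne_zero
  have hft : Differentiable ℝ (pt f) := hf.pt.differentiable one_ne_zero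
  have hgt : Differentiable ℝ (pt g) := hg.pt.differentiable one_ne_zero
  have h := congrArg (px · p)
    (funext (pt_boost_relation hf1 (hg.differentiable two_ne_zero) hrel))
  rw [px_mul (by fun_prop) (by fun_prop), px_const_add, px_mul_const (hft p),
    px_comp_fst_prodMk ((hf1.boostCoord a b) p) (hgt _), px_boostCoord (hf1 p),
    px_const_add, px_mul_const (hft p)] at h
  exact h

theorem px_px_boost_relation (hf : ContDiff ℝ 2 f) (hg : ContDiff ℝ 2 g)
    (hrel : ∀ q, g (q.1, boostCoord f a b q) = boostCoord f b a q) (p : ℝ × ℝ) :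
    px (px g) (p.1, boostCoord f a b p) + px f p * b * px (pt g) (p.1, boostCoord f a b p)
        + (px (px f) p * b * pt g (p.1, boostCoord f a b p)
          + px f p * b * (px (pt g) (p.1, boostCoord f a b p)
            + px f p * b * pt (pt g) (p.1, boostCoord f a b p)))
      = px (px f) p * a := by
  have hf1 : Differentiable ℝ f := hf.differentiable two_ne_zero
  have hfx : Differentiable ℝ (px f) := hf.px.differentiable one_ne_zero
  have hgx : Differentiable ℝ (px g) := hg.px.differentiable one_ne_zero
  have hgt : Differentiable ℝ (pt g) := hg.pt.differentiable one_ne_zero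
  have h := congrArg (px · p)
    (funext (px_boost_relation hf1 (hg.differentiable two_ne_zero) hrel))
  rw [px_add (by fun_prop) (by fun_prop), px_mul (by fun_prop) (by fun_prop),
    px_mul_const (hfx p), px_mul_const (hfx p),
    px_comp_fst_prodMk ((hf1.boostCoord a b) p) (hgx _),
    px_comp_fst_prodMk ((hf1.boostCoord a b) p) (hgt _), px_boostCoord (hf1 p),
    ← px_pt_comm hg] at h
  exact h

theorem bornInfeldOp_boost (hf : ContDiff ℝ 2 f) (hg : ContDiff ℝ 2 g) (hab : a ^ 2 - b ^ 2 = 1)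
    (hrel : ∀ q, g (q.1, boostCoord f a b q) = boostCoord f b a q) (hA : a + pt f p * b ≠ 0) :
    bornInfeldOp g (p.1, boostCoord f a b p) * (a + pt f p * b) ^ 3 = bornInfeldOp f p :=
  have hf1 := hf.differentiable two_ne_zero
  have hg1 := hg.differentiable two_ne_zero
  bornInfeld_jet_boost hab hA (pt_boost_relation hf1 hg1 hrel p)
    (px_boost_relation hf1 hg1 hrel p) (pt_pt_boost_relation hf hg hrel p)
    (px_pt_boost_relation hf hg hrel p) (px_px_boost_relation hf hg hrel p)

end Boost

/-- Hyperbolic rotation symmetry in the `(t,u)`-plane, `v₆ = u∂_t + t∂_u`,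
of the Born-Infeld equation. -/
theorem bornInfeld_hyperbolic_rotation_symmetry
    (f g : ℝ × ℝ → ℝ) (hf : ContDiff ℝ 2 f) (hg : ContDiff ℝ 2 g) (ε : ℝ)
    (hsol : IsBISolution f Set.univ)
    (hrel : ∀ x t : ℝ,
      g (x, t * Real.cosh ε + f (x, t) * Real.sinh ε)
        = t * Real.sinh ε + f (x, t) * Real.cosh ε)
    (hnd : ∀ x t : ℝ, Real.cosh ε + pt f (x, t) * Real.sinh ε ≠ 0)
    (hsurj : ∀ x s : ℝ, ∃ t : ℝ, s = t * Real.cosh ε + f (x, t) * Real.sinh ε) :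
    IsBISolution g Set.univ := by
  refine ⟨⟨Set.univ, isOpen_univ, subset_rfl, hg.contDiffOn⟩, ?_⟩
  rintro ⟨x, s⟩ -
  obtain ⟨t, rfl⟩ := hsurj x s
  have hboost := bornInfeldOp_boost (p := (x, t)) hf hg (Real.cosh_sq_sub_sinh_sq ε)
    (fun q => hrel q.1 q.2) (hnd x t)
  have hf0 : bornInfeldOp f (x, t) = 0 := hsol.2 (x, t) (Set.mem_univ _)
  rw [hf0] at hboost
  exact (mul_eq_zero.mp hboost).resolve_right (pow_ne_zero 3 (hnd x t))
end

section
/- Let c₁ ≠ 0 and c₂ be real constants, and define R(x,t) = 2c₁·e^{(t+c₂)/c₁} + 8c₁³·e^{−(t+c₂)/c₁} − 4x² − 8c₁². Then the function u(x,t) = (1/2)·√(R(x,t)) is a solution of the Born-Infeld equation on the open set Ω = {(x,t) ∈ ℝ² : R(x,t) > 0}. (This is the group-invariant solution associated to the rotation symmetry v₅ = −u∂_x + x∂_u.) -/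
/-!
Solutions invariant under the rotation `v₅` of the `(x, u)`-plane have the form
`u = √(h(t) - x²)`. For such `u` the Born-Infeld operator equals
`(h'² - h h'' - 2h) / (2 (h - x²)^{3/2})`, so `u` is a solution wherever `h'² = h h'' + 2h`.
The given `u` is of this form with `h = R/4 + x²`, and with `θ = (t + c₂)/c₁` the ODE
reduces to `exp θ · exp (-θ) = 1`.
-/

open Filter Topology

section PartialDerivatives

variable {f g : ℝ × ℝ → ℝ} {p : ℝ × ℝ} {a : ℝ}

lemma px_eq_of_hasDerivAt (hf : DifferentiableAt ℝ f p)
    (ha : HasDerivAt (fun x => f (x, p.2)) a p.1) : px f p = a :=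
  (hf.hasFDerivAt.comp_hasDerivAt p.1
    ((hasDerivAt_id p.1).prodMk (hasDerivAt_const p.1 p.2))).unique ha

lemma pt_eq_of_hasDerivAt (hf : DifferentiableAt ℝ f p)
    (ha : HasDerivAt (fun t => f (p.1, t)) a p.2) : pt f p = a :=
  (hf.hasFDerivAt.comp_hasDerivAt p.2
    ((hasDerivAt_const p.2 p.1).prodMk (hasDerivAt_id p.2))).unique ha

lemma px_congr (h : f =ᶠ[𝓝 p] g) : px f p = px g p := by
  rw [px, px, h.fderiv_eq]

lemma pt_congr (h : f =ᶠ[𝓝 p] g) : pt f p = pt g p := by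
  rw [pt, pt, h.fderiv_eq]

end PartialDerivatives

open Real

noncomputable def bornInfeldOperator (u : ℝ × ℝ → ℝ) (p : ℝ × ℝ) : ℝ :=
  (1 - pt u p ^ 2) * px (px u) p + 2 * px u p * pt u p * px (pt u) p
    - (1 + px u p ^ 2) * pt (pt u) p

noncomputable def rotationInvariant (h : ℝ → ℝ) (p : ℝ × ℝ) : ℝ := √(h p.2 - p.1 ^ 2)

section RotationInvariant

variable {h : ℝ → ℝ} {p : ℝ × ℝ}

lemma isOpen_setOf_sq_fst_lt (hh : Continuous h) : IsOpen {p : ℝ × ℝ | p.1 ^ 2 < h p.2} :=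
  isOpen_lt (by fun_prop) (by fun_prop)

lemma differentiableAt_rotationInvariant (hh : DifferentiableAt ℝ h p.2)
    (hp : p.1 ^ 2 < h p.2) : DifferentiableAt ℝ (rotationInvariant h) p := by
  have : h p.2 - p.1 ^ 2 ≠ 0 := (sub_pos.2 hp).ne'
  unfold rotationInvariant
  fun_prop (disch := assumption)

lemma px_rotationInvariant (hh : DifferentiableAt ℝ h p.2) (hp : p.1 ^ 2 < h p.2) :
    px (rotationInvariant h) p = -p.1 / √(h p.2 - p.1 ^ 2) := by
  have hR : 0 < h p.2 - p.1 ^ 2 := sub_pos.2 hp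
  refine px_eq_of_hasDerivAt (differentiableAt_rotationInvariant hh hp)
    ((((hasDerivAt_pow 2 p.1).const_sub (h p.2)).sqrt hR.ne').congr_deriv ?_)
  field_simp
  ring

lemma pt_rotationInvariant (hh : DifferentiableAt ℝ h p.2) (hp : p.1 ^ 2 < h p.2) :
    pt (rotationInvariant h) p = deriv h p.2 / (2 * √(h p.2 - p.1 ^ 2)) :=
  pt_eq_of_hasDerivAt (differentiableAt_rotationInvariant hh hp)
    ((hh.hasDerivAt.sub_const (p.1 ^ 2)).sqrt (sub_pos.2 hp).ne')

lemma eventually_sq_fst_lt (hh : Continuous h) (hp : p.1 ^ 2 < h p.2) :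
    ∀ᶠ q in 𝓝 p, q.1 ^ 2 < h q.2 :=
  (isOpen_setOf_sq_fst_lt hh).mem_nhds hp

lemma px_px_rotationInvariant (hh : Differentiable ℝ h) (hp : p.1 ^ 2 < h p.2) :
    px (px (rotationInvariant h)) p = -h p.2 / √(h p.2 - p.1 ^ 2) ^ 3 := by
  have hR : h p.2 - p.1 ^ 2 ≠ 0 := (sub_pos.2 hp).ne'
  have hs₀ : √(h p.2 - p.1 ^ 2) ≠ 0 := sqrt_ne_zero'.2 (sub_pos.2 hp)
  rw [px_congr ((eventually_sq_fst_lt hh.continuous hp).mono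
    fun q hq => px_rotationInvariant (hh q.2) hq)]
  refine px_eq_of_hasDerivAt (by fun_prop (disch := assumption)) ?_
  have hs := ((hasDerivAt_pow 2 p.1).const_sub (h p.2)).sqrt hR
  refine ((hasDerivAt_neg' p.1).div hs hs₀).congr_deriv ?_
  field_simp
  rw [sq_sqrt (sub_pos.2 hp).le]
  ring

lemma px_pt_rotationInvariant (hh : Differentiable ℝ h) (hh' : Differentiable ℝ (deriv h))
    (hp : p.1 ^ 2 < h p.2) :
    px (pt (rotationInvariant h)) p = p.1 * deriv h p.2 / (2 * √(h p.2 - p.1 ^ 2) ^ 3) := by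
  have hR : h p.2 - p.1 ^ 2 ≠ 0 := (sub_pos.2 hp).ne'
  have hs₀ : √(h p.2 - p.1 ^ 2) ≠ 0 := sqrt_ne_zero'.2 (sub_pos.2 hp)
  have hs₀' : 2 * √(h p.2 - p.1 ^ 2) ≠ 0 := mul_ne_zero two_ne_zero hs₀
  rw [px_congr ((eventually_sq_fst_lt hh.continuous hp).mono
    fun q hq => pt_rotationInvariant (hh q.2) hq)]
  refine px_eq_of_hasDerivAt (by fun_prop (disch := assumption)) ?_
  have hs := (((hasDerivAt_pow 2 p.1).const_sub (h p.2)).sqrt hR).const_mul 2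
  refine ((hasDerivAt_const p.1 (deriv h p.2)).div hs hs₀').congr_deriv ?_
  field_simp
  rw [sq_sqrt (sub_pos.2 hp).le]
  ring

lemma pt_pt_rotationInvariant (hh : Differentiable ℝ h) (hh' : Differentiable ℝ (deriv h))
    (hp : p.1 ^ 2 < h p.2) :
    pt (pt (rotationInvariant h)) p =
      (2 * deriv (deriv h) p.2 * (h p.2 - p.1 ^ 2) - deriv h p.2 ^ 2) /
        (4 * √(h p.2 - p.1 ^ 2) ^ 3) := by
  have hR : h p.2 - p.1 ^ 2 ≠ 0 := (sub_pos.2 hp).ne'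
  have hs₀ : √(h p.2 - p.1 ^ 2) ≠ 0 := sqrt_ne_zero'.2 (sub_pos.2 hp)
  have hs₀' : 2 * √(h p.2 - p.1 ^ 2) ≠ 0 := mul_ne_zero two_ne_zero hs₀
  rw [pt_congr ((eventually_sq_fst_lt hh.continuous hp).mono
    fun q hq => pt_rotationInvariant (hh q.2) hq)]
  refine pt_eq_of_hasDerivAt (by fun_prop (disch := assumption)) ?_
  have hs := (((hh p.2).hasDerivAt.sub_const (p.1 ^ 2)).sqrt hR).const_mul 2
  refine ((hh' p.2).hasDerivAt.div hs hs₀').congr_deriv ?_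
  field_simp
  rw [sq_sqrt (sub_pos.2 hp).le]
  ring

lemma contDiffOn_rotationInvariant (hh : ContDiff ℝ 2 h) :
    ContDiffOn ℝ 2 (rotationInvariant h) {p | p.1 ^ 2 < h p.2} :=
  ((hh.comp contDiff_snd).sub (contDiff_fst.pow 2)).contDiffOn.sqrt
    fun _ hp => (sub_pos.2 hp).ne'

lemma bornInfeldOperator_rotationInvariant (hh : Differentiable ℝ h)
    (hh' : Differentiable ℝ (deriv h)) (hp : p.1 ^ 2 < h p.2) :
    bornInfeldOperator (rotationInvariant h) p =
      (deriv h p.2 ^ 2 - h p.2 * deriv (deriv h) p.2 - 2 * h p.2) /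
        (2 * √(h p.2 - p.1 ^ 2) ^ 3) := by
  rw [bornInfeldOperator, px_rotationInvariant (hh _) hp, pt_rotationInvariant (hh _) hp,
    px_px_rotationInvariant hh hp, px_pt_rotationInvariant hh hh' hp,
    pt_pt_rotationInvariant hh hh' hp]
  have hs₀ : √(h p.2 - p.1 ^ 2) ≠ 0 := sqrt_ne_zero'.2 (sub_pos.2 hp)
  have hh_eq : h p.2 = √(h p.2 - p.1 ^ 2) ^ 2 + p.1 ^ 2 := by
    rw [sq_sqrt (sub_pos.2 hp).le]; ring
  generalize √(h p.2 - p.1 ^ 2) = s at hs₀ hh_eq ⊢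
  rw [hh_eq]
  field_simp
  ring

theorem isBISolution_rotationInvariant (hh : ContDiff ℝ 2 h)
    (hode : ∀ t, deriv h t ^ 2 = h t * deriv (deriv h) t + 2 * h t) :
    IsBISolution (rotationInvariant h) {p | p.1 ^ 2 < h p.2} := by
  refine ⟨⟨_, isOpen_setOf_sq_fst_lt hh.continuous, subset_rfl, contDiffOn_rotationInvariant hh⟩,
    fun p hp => ?_⟩
  change bornInfeldOperator _ p = 0
  rw [bornInfeldOperator_rotationInvariant (hh.differentiable two_ne_zero)
    hh.differentiable_deriv_two hp, hode, add_sub_cancel_left, sub_self, zero_div]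

end RotationInvariant

noncomputable def rotationProfile (c₁ c₂ t : ℝ) : ℝ :=
  c₁ / 2 * exp ((t + c₂) / c₁) + 2 * c₁ ^ 3 * exp (-((t + c₂) / c₁)) - 2 * c₁ ^ 2

lemma hasDerivAt_add_const_div (c₁ c₂ t : ℝ) : HasDerivAt (fun t => (t + c₂) / c₁) c₁⁻¹ t := by
  simpa using ((hasDerivAt_id t).add_const c₂).div_const c₁

section RotationProfile

variable {c₁ c₂ : ℝ}

lemma contDiff_rotationProfile : ContDiff ℝ 2 (rotationProfile c₁ c₂) := by
  unfold rotationProfile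
  fun_prop

lemma deriv_rotationProfile (hc₁ : c₁ ≠ 0) :
    deriv (rotationProfile c₁ c₂) =
      fun t => exp ((t + c₂) / c₁) / 2 - 2 * c₁ ^ 2 * exp (-((t + c₂) / c₁)) := by
  funext t
  have hθ := hasDerivAt_add_const_div c₁ c₂ t
  have hθ' : HasDerivAt (fun t => -((t + c₂) / c₁)) (-c₁⁻¹) t := hθ.neg
  refine ((((hθ.exp.const_mul (c₁ / 2)).add (hθ'.exp.const_mul (2 * c₁ ^ 3))).sub_const
    (2 * c₁ ^ 2)).congr_deriv ?_).deriv
  field_simp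
  ring

lemma deriv_deriv_rotationProfile (hc₁ : c₁ ≠ 0) :
    deriv (deriv (rotationProfile c₁ c₂)) =
      fun t => exp ((t + c₂) / c₁) / (2 * c₁) + 2 * c₁ * exp (-((t + c₂) / c₁)) := by
  rw [deriv_rotationProfile hc₁]
  funext t
  have hθ := hasDerivAt_add_const_div c₁ c₂ t
  have hθ' : HasDerivAt (fun t => -((t + c₂) / c₁)) (-c₁⁻¹) t := hθ.neg
  refine (((hθ.exp.div_const 2).sub (hθ'.exp.const_mul (2 * c₁ ^ 2))).congr_deriv ?_).deriv
  field_simp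
  ring

lemma rotationProfile_ode (hc₁ : c₁ ≠ 0) (t : ℝ) :
    deriv (rotationProfile c₁ c₂) t ^ 2 =
      rotationProfile c₁ c₂ t * deriv (deriv (rotationProfile c₁ c₂)) t
        + 2 * rotationProfile c₁ c₂ t := by
  have hexp : exp ((t + c₂) / c₁) * exp (-((t + c₂) / c₁)) = 1 := by
    rw [← exp_add, add_neg_cancel, exp_zero]
  rw [deriv_deriv_rotationProfile hc₁, deriv_rotationProfile hc₁, rotationProfile]
  field_simp
  linear_combination (-16 * c₁ ^ 2) * hexp

end RotationProfile

lemma half_mul_sqrt_four_mul (x : ℝ) : 1 / 2 * √(4 * x) = √x := by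
  rw [sqrt_mul zero_le_four, show (4 : ℝ) = 2 ^ 2 by norm_num, sqrt_sq zero_le_two]
  ring

/-- Group-invariant solution associated to the rotation symmetry `v₅ = −u∂ₓ + x∂_u`:
`u = ½√(2c₁ e^{(t+c₂)/c₁} + 8c₁³ e^{−(t+c₂)/c₁} − 4x² − 8c₁²)`. -/
theorem bornInfeld_invariant_solution_v5_first
    (c₁ c₂ : ℝ) (hc₁ : c₁ ≠ 0) :
    IsBISolution
      (fun p : ℝ × ℝ => (1 / 2) * Real.sqrt
        (2 * c₁ * Real.exp ((p.2 + c₂) / c₁) + 8 * c₁ ^ 3 * Real.exp (-((p.2 + c₂) / c₁))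
          - 4 * p.1 ^ 2 - 8 * c₁ ^ 2))
      {p : ℝ × ℝ |
        2 * c₁ * Real.exp ((p.2 + c₂) / c₁) + 8 * c₁ ^ 3 * Real.exp (-((p.2 + c₂) / c₁))
          - 4 * p.1 ^ 2 - 8 * c₁ ^ 2 > 0} := by
  have hR (p : ℝ × ℝ) : 2 * c₁ * exp ((p.2 + c₂) / c₁) + 8 * c₁ ^ 3 * exp (-((p.2 + c₂) / c₁))
      - 4 * p.1 ^ 2 - 8 * c₁ ^ 2 = 4 * (rotationProfile c₁ c₂ p.2 - p.1 ^ 2) := by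
    rw [rotationProfile]; ring
  simp_rw [hR, half_mul_sqrt_four_mul, gt_iff_lt, mul_pos_iff_of_pos_left (zero_lt_four' ℝ),
    sub_pos]
  exact isBISolution_rotationInvariant contDiff_rotationProfile (rotationProfile_ode hc₁)
end
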